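/- Let β ∈ (0,1), ν ≥ 0, w ∈ ℝ, m a nonnegative integer and t > 0. Then ∫₀^t e^{−νy} y^m M_{β, m+1}(w y^β) dy = e^{−νt} Σ_{n=0}^∞ ν^n t^{m+n+1} M_{β, m+n+2}(w t^β), where M_{a,b}(z) = Σ_{n=0}^∞ z^n / Γ(an + b) is the two-parameter Mittag-Leffler function. -/

import Mathlib

/-!
Write `e^{-νy} = e^{-νt} e^{ν(t-y)}` and expand both `e^{ν(t-y)}` and the Mittag-Leffler function
into their power series. Each term of the resulting double series integrates to a Beta integral,
`∫₀ᵗ (t-y)ⁿ yˢ dy = n! Γ(s+1) t^{s+n+1} / Γ(s+n+2)`, and summing over the Mittag-Leffler index first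
gives the right-hand side. Integrating term by term is dominated convergence: on `[0, t]` the terms
are bounded by those of the absolutely convergent product of the series of `e^{|ν| t}` and of
`t^m M_{β,m+1}(|w| t^β)`.
-/

open MeasureTheory Real Filter

/-- The two-parameter Mittag-Leffler function `M_{a,b}(z) = ∑ zⁿ / Γ(an + b)`. -/
noncomputable def mittagLeffler (a b z : ℝ) : ℝ :=
  ∑' n : ℕ, z ^ n / Real.Gamma (a * n + b)

open scoped Nat

theorem factorial_floor_le_Gamma_add_one {y : ℝ} (hy : 1 ≤ y) :
    (⌊y⌋₊ ! : ℝ) ≤ Gamma (y + 1) := by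
  have hfloor : (1 : ℝ) ≤ ⌊y⌋₊ := by exact_mod_cast Nat.le_floor (by exact_mod_cast hy)
  have hfl : (⌊y⌋₊ : ℝ) ≤ y := Nat.floor_le (by linarith)
  rw [← Gamma_nat_eq_factorial]
  exact Gamma_strictMonoOn_Ici.monotoneOn (show (2 : ℝ) ≤ ⌊y⌋₊ + 1 by linarith)
    (show (2 : ℝ) ≤ y + 1 by linarith) (by linarith)

theorem rpow_mul_natCast_add_natCast {y : ℝ} (hy : 0 < y) (a : ℝ) (k j : ℕ) :
    y ^ (a * k + j) = (y ^ a) ^ k * y ^ j := by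
  rw [rpow_add hy, rpow_natCast, rpow_mul hy.le, rpow_natCast]

theorem summable_pow_div_Gamma_mul_add {a : ℝ} (ha : 0 < a) (b z : ℝ) :
    Summable fun k : ℕ => z ^ k / Gamma (a * k + b) := by
  -- With `q ^ (a k) = (2|z| + 1) ^ k` and `Γ(a k + b) ≥ ⌊a k + b - 1⌋!`, the bound
  -- `q ^ j / j! ≤ e ^ q` makes the terms eventually `O(2⁻ᵏ)`.
  set q := (2 * |z| + 1) ^ a⁻¹
  have hq : 1 ≤ q := one_le_rpow (by linarith [abs_nonneg z]) (by positivity)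
  refine .of_norm_bounded_eventually_nat (summable_geometric_two.mul_left (q ^ (2 - b) * exp q)) ?_
  have hlarge : ∀ᶠ k : ℕ in atTop, 2 ≤ a * k + b :=
    ((tendsto_natCast_atTop_atTop.const_mul_atTop ha).atTop_add
      tendsto_const_nhds).eventually_ge_atTop 2
  filter_upwards [hlarge] with k hk
  set y := a * k + b - 1
  have hΓ : (⌊y⌋₊ ! : ℝ) ≤ Gamma (a * k + b) := by
    simpa [y] using factorial_floor_le_Gamma_add_one (y := y) (by linarith)
  have hpow : (2 * |z|) ^ k ≤ q ^ (a * k) := by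
    rw [← rpow_mul (by positivity), inv_mul_cancel_left₀ ha.ne', rpow_natCast]
    gcongr
    linarith
  have hexp : q ^ (a * k) ≤ q ^ (2 - b) * q ^ ⌊y⌋₊ := by
    rw [← rpow_natCast, ← rpow_add (by linarith)]
    exact rpow_le_rpow_of_exponent_le hq (by linarith [Nat.lt_floor_add_one y])
  have hfac : q ^ ⌊y⌋₊ / ⌊y⌋₊ ! ≤ exp q := pow_div_factorial_le_exp (x := q) (by linarith) _
  calc ‖z ^ k / Gamma (a * k + b)‖ = (2 * |z|) ^ k / Gamma (a * k + b) * (1 / 2) ^ k := by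
        rw [norm_div, norm_pow, Real.norm_eq_abs, Real.norm_eq_abs,
          abs_of_pos (Gamma_pos_of_pos (by linarith)), mul_pow, div_pow, one_pow]
        field_simp
    _ ≤ q ^ (2 - b) * q ^ ⌊y⌋₊ / ⌊y⌋₊ ! * (1 / 2) ^ k := by
        gcongr
        exact hpow.trans hexp
    _ ≤ q ^ (2 - b) * exp q * (1 / 2) ^ k := by
        rw [mul_div_assoc]
        gcongr

theorem hasSum_mittagLeffler {a : ℝ} (ha : 0 < a) (b z : ℝ) :
    HasSum (fun k : ℕ => z ^ k / Gamma (a * k + b)) (mittagLeffler a b z) :=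
  (summable_pow_div_Gamma_mul_add ha b z).hasSum

theorem hasSum_exp_mul_mittagLeffler {a : ℝ} (ha : 0 < a) (b x z : ℝ) :
    HasSum (fun p : ℕ × ℕ => x ^ p.1 / p.1 ! * (z ^ p.2 / Gamma (a * p.2 + b)))
      (exp x * mittagLeffler a b z) := by
  have hexp : HasSum (fun n : ℕ => x ^ n / n !) (exp x) := by
    rw [Real.exp_eq_exp_ℝ]
    exact NormedSpace.expSeries_div_hasSum_exp x
  exact hexp.mul (hasSum_mittagLeffler ha b z) <| summable_mul_of_summable_norm
    (f := fun n : ℕ => x ^ n / n !) (g := fun k : ℕ => z ^ k / Gamma (a * k + b))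
    (Real.summable_pow_div_factorial x).norm (summable_pow_div_Gamma_mul_add ha b z).norm

theorem integral_sub_pow_mul_rpow {s t : ℝ} (hs : -1 < s) (ht : 0 < t) (n : ℕ) :
    ∫ y in 0..t, (t - y) ^ n * y ^ s =
      n ! * Gamma (s + 1) / Gamma (s + n + 2) * t ^ (s + n + 1) := by
  have hbeta := Complex.betaIntegral_scaled (s + 1) (n + 1) ht
  rw [Complex.betaIntegral_eq_Gamma_mul_div _ _ (by simp; linarith) (by simp; positivity)] at hbeta
  apply Complex.ofReal_injective
  have hcongr : ∀ y ∈ Set.uIcc 0 t, (((t - y) ^ n * y ^ s : ℝ) : ℂ) =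
      (y : ℂ) ^ ((s : ℂ) + 1 - 1) * ((t : ℂ) - y) ^ ((n : ℂ) + 1 - 1) := by
    intro y hy
    rw [Set.uIcc_of_le ht.le] at hy
    push_cast [Complex.ofReal_cpow hy.1, add_sub_cancel_right, Complex.cpow_natCast]
    ring
  rw [← intervalIntegral.integral_ofReal, intervalIntegral.integral_congr hcongr, hbeta,
    Complex.Gamma_nat_eq_factorial]
  push_cast [Complex.ofReal_cpow ht.le, ← Complex.Gamma_ofReal]
  ring_nf

theorem integral_pow_mul_exp_mittagLeffler_term {β t : ℝ} (hβ : 0 ≤ β) (ht : 0 < t) (ν w : ℝ)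
    (m n k : ℕ) :
    ∫ y in 0..t, y ^ m * ((ν * (t - y)) ^ n / n ! * ((w * y ^ β) ^ k / Gamma (β * k + (m + 1)))) =
      ν ^ n * t ^ (m + n + 1) * ((w * t ^ β) ^ k / Gamma (β * k + (m + n + 2))) := by
  have hsplit : ∀ᵐ y, y ∈ Set.uIoc 0 t →
      y ^ m * ((ν * (t - y)) ^ n / n ! * ((w * y ^ β) ^ k / Gamma (β * k + (m + 1)))) =
        ν ^ n / n ! * (w ^ k / Gamma (β * k + (m + 1))) * ((t - y) ^ n * y ^ (β * k + m)) :=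
    ae_of_all _ fun y hy => by
      rw [Set.uIoc_of_le ht.le] at hy
      rw [rpow_mul_natCast_add_natCast hy.1, mul_pow, mul_pow]
      ring
  rw [intervalIntegral.integral_congr_ae hsplit, intervalIntegral.integral_const_mul,
    integral_sub_pow_mul_rpow (neg_one_lt_zero.trans_le (by positivity)) ht,
    show β * k + m + n + 1 = β * k + ((m + n + 1 : ℕ) : ℝ) by push_cast; ring,
    rpow_mul_natCast_add_natCast ht, show β * k + m + 1 = β * k + (m + 1) by ring,
    show β * k + m + n + 2 = β * k + (m + n + 2) by ring]
  field_simp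
  ring

theorem hasSum_integral_pow_mul_exp_mul_mittagLeffler {β : ℝ} (hβ : 0 < β) (ν w : ℝ) (m : ℕ)
    {t : ℝ} (ht : 0 < t) :
    HasSum (fun n : ℕ => ν ^ n * t ^ (m + n + 1) * mittagLeffler β (m + n + 2) (w * t ^ β))
      (∫ y in 0..t, y ^ m * (exp (ν * (t - y)) * mittagLeffler β (m + 1) (w * y ^ β))) := by
  set F : ℕ × ℕ → ℝ → ℝ := fun p y =>
    y ^ m * ((ν * (t - y)) ^ p.1 / p.1 ! * ((w * y ^ β) ^ p.2 / Gamma (β * p.2 + (m + 1))))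
  have hΓ : ∀ k : ℕ, 0 < Gamma (β * k + (m + 1)) := fun k => Gamma_pos_of_pos (by positivity)
  have hdouble : HasSum (fun p => ∫ y in 0..t, F p y)
      (∫ y in 0..t, y ^ m * (exp (ν * (t - y)) * mittagLeffler β (m + 1) (w * y ^ β))) := by
    refine intervalIntegral.hasSum_integral_of_dominated_convergence
      (fun p _ => t ^ m * (|ν * t| ^ p.1 / p.1 ! * (|w * t ^ β| ^ p.2 / Gamma (β * p.2 + (m + 1)))))
      (fun p => (by fun_prop (disch := positivity) : Continuous (F p)).aestronglyMeasurable)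
      ?_ ?_ intervalIntegrable_const ?_
    · refine fun p => ae_of_all _ fun y hy => ?_
      obtain ⟨hy0, hyt⟩ : 0 < y ∧ y ≤ t := by rwa [Set.uIoc_of_le ht.le] at hy
      have hyβ : y ^ β ≤ t ^ β := rpow_le_rpow hy0.le hyt hβ.le
      have hty : |t - y| ≤ t := abs_le.2 ⟨by linarith, by linarith⟩
      have hnonneg : 0 ≤ (|w| * y ^ β) ^ p.2 / Gamma (β * p.2 + (m + 1)) :=
        div_nonneg (by positivity) (hΓ _).le
      simp only [F, norm_mul, norm_div, norm_pow, Real.norm_eq_abs, abs_of_pos (hΓ _),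
        Nat.abs_cast, abs_of_pos hy0, abs_mul, abs_of_pos (rpow_pos_of_pos hy0 β),
        abs_of_pos (rpow_pos_of_pos ht β), abs_of_pos ht]
      gcongr
    · exact ae_of_all _ fun y _ => ((Real.summable_pow_div_factorial _).mul_of_nonneg
        (summable_pow_div_Gamma_mul_add hβ _ _) (fun _ => by positivity)
        (fun k => div_nonneg (by positivity) (hΓ k).le)).mul_left _
    · exact ae_of_all _ fun y _ => (hasSum_exp_mul_mittagLeffler hβ _ _ _).mul_left (y ^ m)
  simp_rw [F, integral_pow_mul_exp_mittagLeffler_term hβ.le ht] at hdouble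
  exact hdouble.prod_fiberwise fun n => by
    simpa [mul_div_assoc] using
      (hasSum_mittagLeffler hβ _ (w * t ^ β)).mul_left (ν ^ n * t ^ (m + n + 1))

theorem integral_exp_pow_mittagLeffler_general
    (β ν w : ℝ) (hβ : β ∈ Set.Ioo (0 : ℝ) 1) (m : ℕ) (t : ℝ) (ht : 0 < t) :
    ∫ y in (0 : ℝ)..t, Real.exp (-ν * y) * y ^ m * mittagLeffler β (m + 1) (w * y ^ β) =
      Real.exp (-ν * t) *
        ∑' n : ℕ, ν ^ n * t ^ (m + n + 1) * mittagLeffler β (m + n + 2) (w * t ^ β) := by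
  have hsplit : ∀ y : ℝ, exp (-ν * y) * y ^ m * mittagLeffler β (m + 1) (w * y ^ β) =
      exp (-ν * t) * (y ^ m * (exp (ν * (t - y)) * mittagLeffler β (m + 1) (w * y ^ β))) := by
    intro y
    rw [show -ν * y = -ν * t + ν * (t - y) by ring, exp_add]
    ring
  simp_rw [hsplit, intervalIntegral.integral_const_mul,
    (hasSum_integral_pow_mul_exp_mul_mittagLeffler hβ.1 ν w m ht).tsum_eq]

theorem integral_exp_pow_mittagLeffler
    (β ν w : ℝ) (hβ : β ∈ Set.Ioo (0 : ℝ) 1) (hν : 0 ≤ ν) (m : ℕ) (t : ℝ) (ht : 0 < t) :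
    ∫ y in (0 : ℝ)..t, Real.exp (-ν * y) * y ^ m * mittagLeffler β (m + 1) (w * y ^ β) =
      Real.exp (-ν * t) *
        ∑' n : ℕ, ν ^ n * t ^ (m + n + 1) * mittagLeffler β (m + n + 2) (w * t ^ β) :=
  integral_exp_pow_mittagLeffler_general β ν w hβ m t ht
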